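/- Let m ≥ 1 and n ≥ 1 be natural numbers, let Γ, τ₀ be positive reals with Γτ₀ < 1/4 and 4Γτ₀·(m+n−1) < 1, and let μ : ℕ → ℝ be a sequence of nonnegative reals with μ_0 = 1 and μ_i ≤ i!·τ₀^i for all integers 1 ≤ i ≤ m+n−1. Then B(m,n)/Γ ≤ ((m−1)!+1)·m!·(Γτ₀)^m / (1−4(m+n−1)Γτ₀)^{2m+1} + n!·(4Γτ₀)^n · ∑_{k=0}^{m} h(k)·k!·(Γτ₀)^k / (1−4(m+n−1)Γτ₀)^{2k}, where h(0) := 1 and h(k) := (k−1)!+1 for k ≥ 1. -/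

import Mathlib

/-- `C₀(a,b)`: binomial coefficient `a choose b` for an integer `a` and natural `b`,
with the convention that it vanishes whenever `a < 0` (and also when `b > a`). -/
def C0 (a : ℤ) (b : ℕ) : ℕ := if 0 ≤ a then a.toNat.choose b else 0

/-- `M_n[j] := ∑_{k=1}^{n} ∑_{(q₁,…,q_k) ∈ W_k^{j+k-1}} ∏_{i=1}^{k} (Γ μ_{qᵢ})`,
summing over weak compositions of `j+k-1` into `k` parts (so `M_0[j] = 0`). -/
noncomputable def Mker (Γ : ℝ) (μ : ℕ → ℝ) (n j : ℕ) : ℝ :=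
  ∑ k ∈ Finset.Icc 1 n, ∑ q ∈ Finset.Nat.antidiagonalTuple k (j + k - 1),
    ∏ i : Fin k, (Γ * μ (q i))

/-- `ε_n := Γ ∑_{(q₁,…,q_n) ∈ W_n^n} ∏_{i=1}^n (Γ μ_{qᵢ})` (so `ε_0 = Γ`). -/
noncomputable def eps (Γ : ℝ) (μ : ℕ → ℝ) (n : ℕ) : ℝ :=
  Γ * ∑ q ∈ Finset.Nat.antidiagonalTuple n n, ∏ i : Fin n, (Γ * μ (q i))

/-- `B(m,n) := ∑_{(q₁,…,q_{m+1}) ∈ W_{m+1}^m} ∏_{l=1}^{m+1} C₀(l-1-∑_{i<l}qᵢ, q_l) M_n[q_l]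
+ ε_n ∑_{k=0}^{m} ∑_{(q₁,…,q_k) ∈ W_k^k} ∏_{l=1}^{k} C₀(l-∑_{i<l}qᵢ, q_l) M_n[q_l]`,
where the `k = 0` term of the second sum is `1`. -/
noncomputable def Bfun (Γ : ℝ) (μ : ℕ → ℝ) (m n : ℕ) : ℝ :=
  (∑ q ∈ Finset.Nat.antidiagonalTuple (m + 1) m,
    ∏ l : Fin (m + 1),
      (C0 ((l : ℤ) - ∑ i ∈ Finset.Iio l, (q i : ℤ)) (q l) : ℝ) * Mker Γ μ n (q l))
  + eps Γ μ n *
      ∑ k ∈ Finset.range (m + 1), ∑ q ∈ Finset.Nat.antidiagonalTuple k k,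
        ∏ l : Fin k,
          (C0 ((l : ℤ) + 1 - ∑ i ∈ Finset.Iio l, (q i : ℤ)) (q l) : ℝ) * Mker Γ μ n (q l)

/-!
Both sums defining `B(m,n)` run over weak compositions `q` and multiply the factors
`C₀(l + c - q₀ - ⋯ - q_{l-1}, q_l) · M_n[q_l]` (`l` counted from `0`), with `c = 0` in the first
sum and `c = 1` in the second. In the first, the factor `l = 0` forces `q₀ = 0`, which leaves
`M_n[0]` times a sum of the second kind.

Expanding `M_n[j]` and using `∑_{a+b=N} a! b! ≤ 4 N!` bounds the `k`-th summand of `M_n[j]` by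
`Γ τ₀^j j! s^(k-1)` with `s = 4(m+n-1)Γτ₀`, so `M_n[j] ≤ Γ τ₀^j j! / (1 - s)`; likewise
`ε_n ≤ Γ n! (4Γτ₀)^n`. Once `M_n[j]` is replaced by `j!`, the composition sums obey the
recurrence of the Bessel polynomial coefficients `(K+b)! / (2^b b! (K-b)!)`, so the diagonal sum
is exactly `(2k-1)!!`, and `(2k-1)!! ≤ h(k) k!`.
-/

open Finset
open scoped Nat

theorem Finset.Nat.sum_antidiagonalTuple_succ {M : Type*} [AddCommMonoid M] (k N : ℕ)
    (g : (Fin (k + 1) → ℕ) → M) :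
    ∑ q ∈ antidiagonalTuple (k + 1) N, g q =
      ∑ p ∈ antidiagonal N, ∑ q ∈ antidiagonalTuple k p.2, g (Fin.snoc q p.1) := by
  rw [sum_sigma']
  refine (sum_nbij' (fun p => Fin.snoc p.2 p.1.1)
    (fun q => ⟨(q (Fin.last k), ∑ i, Fin.init q i), Fin.init q⟩) ?_ ?_ ?_ ?_ ?_).symm
  · rintro ⟨⟨a, b⟩, q⟩ h
    simp only [mem_sigma, HasAntidiagonal.mem_antidiagonal, Nat.mem_antidiagonalTuple] at h ⊢
    simp [Fin.sum_univ_castSucc, h.2, ← h.1, add_comm]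
  · intro q h
    simp only [mem_sigma, HasAntidiagonal.mem_antidiagonal, Nat.mem_antidiagonalTuple] at h ⊢
    simp [← h, Fin.sum_univ_castSucc, Fin.init, add_comm]
  · rintro ⟨⟨a, b⟩, q⟩ h
    simp only [mem_sigma, HasAntidiagonal.mem_antidiagonal, Nat.mem_antidiagonalTuple] at h
    simp [h.2]
  · intro q _
    simp
  · intro _ _
    rfl

section CompositionSum

variable {R : Type*} [CommSemiring R]

def compositionSum (f : ℕ → ℕ → ℕ → R) (k N : ℕ) : R :=
  ∑ q ∈ Nat.antidiagonalTuple k N, ∏ l : Fin k, f l (∑ i ∈ Iio l, q i) (q l)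

theorem compositionSum_zero (f : ℕ → ℕ → ℕ → R) (N : ℕ) :
    compositionSum f 0 N = if N = 0 then 1 else 0 := by
  cases N <;> simp [compositionSum]

theorem compositionSum_succ (f : ℕ → ℕ → ℕ → R) (k N : ℕ) :
    compositionSum f (k + 1) N =
      ∑ p ∈ antidiagonal N, f k p.2 p.1 * compositionSum f k p.2 := by
  rw [compositionSum, Finset.Nat.sum_antidiagonalTuple_succ]
  refine sum_congr rfl fun p _ => ?_
  rw [compositionSum, mul_sum]
  refine sum_congr rfl fun q hq => ?_
  rw [Nat.mem_antidiagonalTuple] at hq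
  simp [Fin.prod_univ_castSucc, Fin.sum_Iio_castSucc, Fin.Iio_last_eq_map, hq, mul_comm]

end CompositionSum

section OrderedCompositionSum

variable {R : Type*} [CommSemiring R] [PartialOrder R] [IsOrderedRing R]

theorem compositionSum_nonneg {f : ℕ → ℕ → ℕ → R} (hf : ∀ l p q, 0 ≤ f l p q) (k N : ℕ) :
    0 ≤ compositionSum f k N :=
  sum_nonneg fun _ _ => prod_nonneg fun _ _ => hf _ _ _

theorem compositionSum_le {f g : ℕ → ℕ → ℕ → R} {K τ : R} {k N : ℕ}
    (hf : ∀ l p q, q ≤ N → 0 ≤ f l p q) (hfg : ∀ l p q, q ≤ N → f l p q ≤ K * τ ^ q * g l p q) :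
    compositionSum f k N ≤ K ^ k * τ ^ N * compositionSum g k N := by
  rw [compositionSum, compositionSum, mul_sum]
  refine sum_le_sum fun q hq => ?_
  rw [Nat.mem_antidiagonalTuple] at hq
  have hqN : ∀ l, q l ≤ N := fun l => hq ▸ single_le_sum (fun _ _ => Nat.zero_le _) (mem_univ l)
  calc ∏ l : Fin k, f l (∑ i ∈ Iio l, q i) (q l)
      ≤ ∏ l : Fin k, K * τ ^ q l * g l (∑ i ∈ Iio l, q i) (q l) :=
        prod_le_prod (fun l _ => hf _ _ _ (hqN l)) fun l _ => hfg _ _ _ (hqN l)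
    _ = _ := by simp [prod_mul_distrib, prod_pow_eq_pow_sum, hq]

end OrderedCompositionSum

theorem sum_antidiagonal_factorial_mul_le : ∀ N, ∑ p ∈ antidiagonal N, p.1 ! * p.2 ! ≤ 4 * N !
  | 0 => by simp
  | 1 => by simp [Nat.sum_antidiagonal_succ]
  | N + 2 => by
    have inner : 4 * ∑ p ∈ antidiagonal N, (p.1 + 1)! * (p.2 + 1)! ≤
        (N + 2) ^ 2 * ∑ p ∈ antidiagonal N, p.1 ! * p.2 ! := by
      rw [mul_sum, mul_sum]
      refine sum_le_sum fun p hp => ?_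
      rw [HasAntidiagonal.mem_antidiagonal] at hp
      rw [Nat.factorial_succ, Nat.factorial_succ, ← hp]
      calc 4 * ((p.1 + 1) * p.1 ! * ((p.2 + 1) * p.2 !))
          = 4 * (p.1 + 1) * (p.2 + 1) * (p.1 ! * p.2 !) := by ring
        _ ≤ (p.1 + 1 + (p.2 + 1)) ^ 2 * (p.1 ! * p.2 !) :=
          Nat.mul_le_mul_right _ (four_mul_le_pow_two_add _ _)
        _ = _ := by ring
    have hsq : (N + 2) ^ 2 * N ! ≤ 2 * (N + 2)! := by
      rw [Nat.factorial_succ, Nat.factorial_succ, ← mul_assoc, ← mul_assoc]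
      exact Nat.mul_le_mul_right _ (by nlinarith)
    have ih := Nat.mul_le_mul_left ((N + 2) ^ 2) (sum_antidiagonal_factorial_mul_le N)
    rw [Nat.sum_antidiagonal_succ, Nat.sum_antidiagonal_succ']
    simp only [Nat.factorial_zero, one_mul, mul_one]
    linarith

theorem compositionSum_factorial_le {k : ℕ} (hk : 1 ≤ k) (N : ℕ) :
    compositionSum (fun _ _ q => q !) k N ≤ 4 ^ (k - 1) * N ! := by
  induction k, hk using Nat.le_induction generalizing N with
  | base => simp [compositionSum]
  | succ k hk ih =>
    rw [compositionSum_succ]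
    calc ∑ p ∈ antidiagonal N, p.1 ! * compositionSum (fun _ _ q => q !) k p.2
        ≤ ∑ p ∈ antidiagonal N, 4 ^ (k - 1) * (p.1 ! * p.2 !) :=
          sum_le_sum fun p _ => by rw [mul_left_comm]; exact Nat.mul_le_mul_left _ (ih p.2)
      _ ≤ 4 ^ (k - 1) * (4 * N !) := by
          rw [← mul_sum]; exact Nat.mul_le_mul_left _ (sum_antidiagonal_factorial_mul_le N)
      _ = 4 ^ (k + 1 - 1) * N ! := by
          rw [Nat.add_sub_cancel, ← mul_assoc, ← pow_succ, Nat.sub_add_cancel hk]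

theorem factorial_add_le_factorial_mul_pow {j r D : ℕ} (h : j + r ≤ D) :
    (j + r)! ≤ j ! * D ^ r := by
  rw [← Nat.factorial_mul_ascFactorial]
  exact Nat.mul_le_mul_left _ ((Nat.ascFactorial_le_pow_add j r).trans (Nat.pow_le_pow_left h r))

theorem div_pow_le_div_pow {K : Type*} [Field K] [LinearOrder K] [IsStrictOrderedRing K]
    {a b x : K} {i j : ℕ} (hb : 0 ≤ b) (hab : a ≤ b) (hx0 : 0 < x) (hx1 : x ≤ 1) (hij : i ≤ j) :
    a / x ^ i ≤ b / x ^ j :=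
  div_le_div₀ hb hab (pow_pos hx0 _) (pow_le_pow_of_le_one hx0.le hx1 hij)

theorem doubleFactorial_two_mul_add_one (N : ℕ) : (2 * N + 1)‼ = (2 * N + 1) * (2 * N - 1)‼ := by
  cases N with
  | zero => rfl
  | succ N => rw [show 2 * (N + 1) + 1 = 2 * N + 1 + 2 by ring, Nat.doubleFactorial_add_two]; rfl

theorem doubleFactorial_two_mul_sub_one_le (k : ℕ) : (2 * k - 1)‼ ≤ ((k - 1)! + 1) * k ! := by
  rcases lt_or_ge k 3 with hk | hk
  · interval_cases k <;> decide
  induction k, hk using Nat.le_induction with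
  | base => decide
  | succ k hk ih =>
    have hfac := Nat.mul_factorial_pred (by omega : k ≠ 0)
    have hpos := Nat.factorial_pos (k - 1)
    rw [show 2 * (k + 1) - 1 = 2 * k + 1 by omega, doubleFactorial_two_mul_add_one,
      Nat.add_sub_cancel, Nat.factorial_succ]
    calc (2 * k + 1) * (2 * k - 1)‼ ≤ (2 * k + 1) * (((k - 1)! + 1) * k !) :=
          Nat.mul_le_mul_left _ ih
      _ = ((2 * k + 1) * ((k - 1)! + 1)) * (k * (k - 1)!) := by rw [hfac]; ring
      _ ≤ ((k * (k - 1)! + 1) * (k + 1)) * (k * (k - 1)!) :=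
          Nat.mul_le_mul_right _ (by nlinarith [Nat.mul_le_mul_right (k - 1)! hk])
      _ = (k ! + 1) * ((k + 1) * k !) := by rw [hfac]; ring

theorem C0_natCast (n b : ℕ) : C0 n b = n.choose b := by simp [C0]

/-- `(K + b)! / (2 ^ b * b! * (K - b)!)`, the coefficient of `x ^ b` in the Bessel polynomial
`y_K`; written so that it is visibly a natural number vanishing for `b > K`. -/
def besselCoeff (K b : ℕ) : ℕ := (K + b).choose (2 * b) * (2 * b - 1)‼

theorem besselCoeff_zero_right (K : ℕ) : besselCoeff K 0 = 1 := by simp [besselCoeff]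

theorem besselCoeff_eq_zero {K b : ℕ} (h : K < b) : besselCoeff K b = 0 := by
  simp [besselCoeff, Nat.choose_eq_zero_of_lt (by omega : K + b < 2 * b)]

theorem besselCoeff_self (k : ℕ) : besselCoeff k k = (2 * k - 1)‼ := by
  simp [besselCoeff, ← two_mul]

theorem besselCoeff_succ_succ (K N : ℕ) :
    besselCoeff (K + 1) (N + 1) = (K + 1 - N) * besselCoeff (K + 1) N + besselCoeff K (N + 1) := by
  have key := Nat.choose_succ_right_eq (K + N + 1) (2 * N)
  rw [show K + N + 1 - 2 * N = K + 1 - N by omega] at key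
  unfold besselCoeff
  rw [show K + 1 + (N + 1) = K + N + 1 + 1 by ring, show 2 * (N + 1) = 2 * N + 1 + 1 by ring,
    Nat.choose_succ_succ', Nat.add_sub_cancel, doubleFactorial_two_mul_add_one,
    show K + 1 + N = K + N + 1 by ring, show K + (N + 1) = K + N + 1 by ring, add_mul,
    ← mul_assoc ((K + N + 1).choose (2 * N + 1)), key]
  ring

theorem sum_antidiagonal_C0_mul_besselCoeff (K N : ℕ) :
    ∑ p ∈ antidiagonal N, C0 ((K : ℤ) + 1 - p.2) p.1 * p.1 ! * besselCoeff K p.2 =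
      besselCoeff (K + 1) N := by
  induction N with
  | zero => simp [C0, besselCoeff_zero_right]; omega
  | succ N ih =>
    rw [Nat.sum_antidiagonal_succ, besselCoeff_succ_succ, ← ih, mul_sum, add_comm]
    dsimp only
    congr 1
    · refine sum_congr rfl fun p hp => ?_
      rw [HasAntidiagonal.mem_antidiagonal] at hp
      rcases le_or_gt p.2 K with h | h
      · have e (a : ℕ) : (K + 1 - p.2).choose a * a ! = (K + 1 - p.2).descFactorial a := by
          rw [Nat.descFactorial_eq_factorial_mul_choose, mul_comm]
        rw [show (K : ℤ) + 1 - p.2 = ((K + 1 - p.2 : ℕ) : ℤ) by omega, C0_natCast, C0_natCast,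
          e, e, Nat.descFactorial_succ, show K + 1 - p.2 - p.1 = K + 1 - N by omega]
        ring
      · simp [besselCoeff_eq_zero h]
    · rcases le_or_gt (N + 1) K with h | h
      · simp [C0]; omega
      · simp [besselCoeff_eq_zero h]

section BinomKernel

variable {R : Type*} [CommSemiring R]

def binomKernel (c : ℤ) (w : ℕ → R) (l p q : ℕ) : R := C0 ((l : ℤ) + c - p) q * w q

theorem compositionSum_binomKernel_zero_succ (w : ℕ → R) (k N : ℕ) :
    compositionSum (binomKernel 0 w) (k + 1) N = w 0 * compositionSum (binomKernel 1 w) k N := by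
  induction k generalizing N with
  | zero =>
    rw [compositionSum_zero]
    cases N <;> simp [compositionSum, binomKernel, C0]
  | succ k ih =>
    rw [compositionSum_succ, compositionSum_succ, mul_sum]
    refine sum_congr rfl fun p _ => ?_
    rw [ih, binomKernel, binomKernel]
    push_cast
    ring_nf

theorem compositionSum_binomKernel_one_factorial (k N : ℕ) :
    compositionSum (binomKernel 1 fun q => (q ! : R)) k N = besselCoeff k N := by
  induction k generalizing N with
  | zero =>
    rcases N with _ | N
    · simp [compositionSum_zero, besselCoeff_zero_right]
    · simp [compositionSum_zero, besselCoeff_eq_zero]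
  | succ k ih =>
    rw [compositionSum_succ, ← sum_antidiagonal_C0_mul_besselCoeff]
    push_cast
    simp [binomKernel, ih, mul_assoc]

end BinomKernel

theorem compositionSum_binomKernel_one_le {R : Type*} [CommSemiring R] [PartialOrder R]
    [IsOrderedRing R] {w : ℕ → R} {K τ : R} {k N : ℕ} (hw0 : ∀ j, 0 ≤ w j)
    (hw : ∀ j ≤ N, w j ≤ K * τ ^ j * j !) :
    compositionSum (binomKernel 1 w) k N ≤ K ^ k * τ ^ N * besselCoeff k N := by
  rw [← compositionSum_binomKernel_one_factorial]
  refine compositionSum_le (fun _ _ q _ => mul_nonneg (Nat.cast_nonneg _) (hw0 q))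
    fun _ _ q hq => ?_
  rw [binomKernel, binomKernel, mul_left_comm]
  exact mul_le_mul_of_nonneg_left (hw q hq) (Nat.cast_nonneg _)

theorem sum_antidiagonalTuple_prod_le {Γ τ : ℝ} {μ : ℕ → ℝ} {k N : ℕ} (hΓ : 0 ≤ Γ) (hτ : 0 ≤ τ)
    (hμ0 : ∀ i, 0 ≤ μ i) (hμ : ∀ i ≤ N, μ i ≤ i ! * τ ^ i) (hk : 1 ≤ k) :
    ∑ q ∈ Nat.antidiagonalTuple k N, ∏ i : Fin k, (Γ * μ (q i)) ≤
      Γ ^ k * τ ^ N * (4 ^ (k - 1) * N !) := by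
  change compositionSum (fun _ _ q => Γ * μ q) k N ≤ _
  calc compositionSum (fun _ _ q => Γ * μ q) k N
      ≤ Γ ^ k * τ ^ N * compositionSum (fun _ _ q => (q ! : ℝ)) k N :=
        compositionSum_le (fun _ _ q _ => mul_nonneg hΓ (hμ0 q)) fun _ _ q hq => by
          rw [mul_assoc, mul_comm (τ ^ q)]; exact mul_le_mul_of_nonneg_left (hμ q hq) hΓ
    _ ≤ Γ ^ k * τ ^ N * (4 ^ (k - 1) * N !) := by
        have hcast : compositionSum (fun _ _ q => (q ! : ℝ)) k N =
            (compositionSum (fun _ _ q => q !) k N : ℕ) := by simp [compositionSum]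
        rw [hcast]
        gcongr
        exact_mod_cast compositionSum_factorial_le hk N

theorem Mker_nonneg {Γ : ℝ} {μ : ℕ → ℝ} (hΓ : 0 ≤ Γ) (hμ0 : ∀ i, 0 ≤ μ i) (n j : ℕ) :
    0 ≤ Mker Γ μ n j :=
  sum_nonneg fun _ _ => sum_nonneg fun _ _ => prod_nonneg fun _ _ => mul_nonneg hΓ (hμ0 _)

theorem Mker_le {Γ τ : ℝ} {μ : ℕ → ℝ} {D n j : ℕ} (hΓ : 0 ≤ Γ) (hτ : 0 ≤ τ)
    (hμ0 : ∀ i, 0 ≤ μ i) (hμ : ∀ i ≤ D, μ i ≤ i ! * τ ^ i) (hs : 4 * Γ * τ * D < 1)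
    (hj : j + n ≤ D + 1) :
    Mker Γ μ n j ≤ Γ / (1 - 4 * Γ * τ * D) * τ ^ j * j ! := by
  set s := 4 * Γ * τ * D with hs_def
  have hterm : ∀ k ∈ Icc 1 n, ∑ q ∈ Nat.antidiagonalTuple k (j + k - 1),
      ∏ i : Fin k, (Γ * μ (q i)) ≤ Γ * τ ^ j * j ! * s ^ (k - 1) := by
    intro k hk
    rw [mem_Icc] at hk
    obtain ⟨r, rfl⟩ : ∃ r, k = r + 1 := ⟨k - 1, by omega⟩
    have hjr : j + r ≤ D := by omega
    have hfac : ((j + r)! : ℝ) ≤ j ! * D ^ r := by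
      exact_mod_cast factorial_add_le_factorial_mul_pow hjr
    calc _ ≤ Γ ^ (r + 1) * τ ^ (j + r) * (4 ^ r * (j + r)!) := by
          simpa using sum_antidiagonalTuple_prod_le hΓ hτ hμ0
            (fun i hi => hμ i (hi.trans hjr)) (by omega : 1 ≤ r + 1)
      _ ≤ Γ ^ (r + 1) * τ ^ (j + r) * (4 ^ r * (j ! * D ^ r)) := by gcongr
      _ = Γ * τ ^ j * j ! * s ^ (r + 1 - 1) := by
          rw [hs_def]; simp only [Nat.add_sub_cancel]; ring
  have hgeom : ∑ k ∈ Icc 1 n, s ^ (k - 1) ≤ 1 / (1 - s) := by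
    rw [← Finset.Ico_add_one_right_eq_Icc, sum_Ico_eq_sum_range, ← pow_zero s,
      ← zero_add (1 : ℕ)]
    simpa using geom_sum_Ico_le_of_lt_one (m := 0) (n := n) (by positivity) hs
  calc Mker Γ μ n j ≤ ∑ k ∈ Icc 1 n, Γ * τ ^ j * j ! * s ^ (k - 1) := sum_le_sum hterm
    _ ≤ Γ * τ ^ j * j ! * (1 / (1 - s)) := by rw [← mul_sum]; gcongr
    _ = Γ / (1 - s) * τ ^ j * j ! := by ring

theorem eps_nonneg {Γ : ℝ} {μ : ℕ → ℝ} (hΓ : 0 ≤ Γ) (hμ0 : ∀ i, 0 ≤ μ i) (n : ℕ) :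
    0 ≤ eps Γ μ n :=
  mul_nonneg hΓ (sum_nonneg fun _ _ => prod_nonneg fun _ _ => mul_nonneg hΓ (hμ0 _))

theorem eps_le {Γ τ : ℝ} {μ : ℕ → ℝ} {n : ℕ} (hΓ : 0 ≤ Γ) (hτ : 0 ≤ τ) (hμ0 : ∀ i, 0 ≤ μ i)
    (hμ : ∀ i ≤ n, μ i ≤ i ! * τ ^ i) (hn : 1 ≤ n) :
    eps Γ μ n ≤ Γ * (n ! * (4 * Γ * τ) ^ n) := by
  rw [eps]
  gcongr
  calc _ ≤ Γ ^ n * τ ^ n * (4 ^ (n - 1) * n !) :=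
        sum_antidiagonalTuple_prod_le hΓ hτ hμ0 hμ hn
    _ ≤ Γ ^ n * τ ^ n * (4 ^ n * n !) := by gcongr <;> [norm_num; omega]
    _ = n ! * (4 * Γ * τ) ^ n := by ring

theorem Bfun_eq_compositionSum (Γ : ℝ) (μ : ℕ → ℝ) (m n : ℕ) :
    Bfun Γ μ m n = Mker Γ μ n 0 * compositionSum (binomKernel 1 (Mker Γ μ n)) m m +
      eps Γ μ n * ∑ k ∈ range (m + 1), compositionSum (binomKernel 1 (Mker Γ μ n)) k k := by
  rw [← compositionSum_binomKernel_zero_succ]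
  simp [Bfun, compositionSum, binomKernel]

theorem Bfun_div_le_of_Mker_le {Γ τ s E : ℝ} {μ : ℕ → ℝ} {m n : ℕ} (hΓ : 0 < Γ) (hs : s < 1)
    (hμ0 : ∀ i, 0 ≤ μ i) (hM : ∀ j ≤ m, Mker Γ μ n j ≤ Γ / (1 - s) * τ ^ j * j !)
    (hε : eps Γ μ n ≤ Γ * E) :
    Bfun Γ μ m n / Γ ≤ (2 * m - 1)‼ * (Γ * τ) ^ m / (1 - s) ^ (m + 1) +
      E * ∑ k ∈ range (m + 1), (2 * k - 1)‼ * (Γ * τ) ^ k / (1 - s) ^ k := by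
  have hs0 : 0 < 1 - s := by linarith
  have hT0 (k : ℕ) : 0 ≤ compositionSum (binomKernel 1 (Mker Γ μ n)) k k :=
    compositionSum_nonneg (fun _ _ q => mul_nonneg (Nat.cast_nonneg _)
      (Mker_nonneg hΓ.le hμ0 n q)) k k
  have hT (k : ℕ) (hk : k ≤ m) : compositionSum (binomKernel 1 (Mker Γ μ n)) k k ≤
      (Γ / (1 - s)) ^ k * τ ^ k * (2 * k - 1)‼ := by
    simpa [besselCoeff_self] using compositionSum_binomKernel_one_le (k := k)
      (Mker_nonneg hΓ.le hμ0 n) fun j hj => hM j (hj.trans hk)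
  have hM0 : Mker Γ μ n 0 ≤ Γ / (1 - s) := by simpa using hM 0 (Nat.zero_le _)
  have hΓE : 0 ≤ Γ * E := (eps_nonneg hΓ.le hμ0 n).trans hε
  rw [Bfun_eq_compositionSum, add_div]
  gcongr ?_ + ?_
  · calc Mker Γ μ n 0 * compositionSum (binomKernel 1 (Mker Γ μ n)) m m / Γ
        ≤ Γ / (1 - s) * ((Γ / (1 - s)) ^ m * τ ^ m * (2 * m - 1)‼) / Γ := by
          gcongr
          exacts [hT0 m, hT m le_rfl]
      _ = _ := by rw [div_pow, mul_pow]; field_simp; ring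
  · calc (eps Γ μ n * ∑ k ∈ range (m + 1), compositionSum (binomKernel 1 (Mker Γ μ n)) k k) / Γ
        ≤ (Γ * E * ∑ k ∈ range (m + 1), (Γ / (1 - s)) ^ k * τ ^ k * (2 * k - 1)‼) / Γ := by
          gcongr with k hk
          · exact sum_nonneg fun k _ => hT0 k
          · exact hT k (by rw [mem_range] at hk; omega)
      _ = _ := by
          rw [mul_assoc, mul_div_cancel_left₀ _ hΓ.ne']
          congr 1
          refine sum_congr rfl fun k _ => ?_
          rw [div_pow, mul_pow]; field_simp

theorem Bfun_le_general (m n : ℕ) (hm : 1 ≤ m) (hn : 1 ≤ n) (Γ τ₀ : ℝ)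
    (hΓ : 0 < Γ) (hτ : 0 < τ₀)
    (hsmall : 4 * Γ * τ₀ * ((m : ℝ) + n - 1) < 1)
    (μ : ℕ → ℝ) (hμ0 : μ 0 = 1) (hμnonneg : ∀ i, 0 ≤ μ i)
    (hμ : ∀ i, 1 ≤ i → i ≤ m + n - 1 → μ i ≤ i.factorial * τ₀ ^ i) :
    Bfun Γ μ m n / Γ ≤
      ((m - 1).factorial + 1) * m.factorial * (Γ * τ₀) ^ m /
          (1 - 4 * ((m : ℝ) + n - 1) * Γ * τ₀) ^ (2 * m + 1)
      + n.factorial * (4 * Γ * τ₀) ^ n *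
          ∑ k ∈ Finset.range (m + 1),
            (if k = 0 then (1 : ℝ) else ((k - 1).factorial + 1 : ℝ)) * k.factorial *
              (Γ * τ₀) ^ k / (1 - 4 * ((m : ℝ) + n - 1) * Γ * τ₀) ^ (2 * k) := by
  set s := 4 * ((m : ℝ) + n - 1) * Γ * τ₀
  have hs : 4 * Γ * τ₀ * ((m + n - 1 : ℕ) : ℝ) = s := by
    rw [Nat.cast_sub (by omega)]; push_cast; ring
  have hs1 : s < 1 := by linarith
  have hs0 : 0 ≤ s := hs ▸ by positivity
  have hμ' (i : ℕ) (hi : i ≤ m + n - 1) : μ i ≤ i ! * τ₀ ^ i := by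
    rcases Nat.eq_zero_or_pos i with rfl | h
    · simp [hμ0]
    · exact hμ i h hi
  refine (Bfun_div_le_of_Mker_le hΓ hs1 hμnonneg
    (fun j hj => hs ▸ Mker_le hΓ.le hτ.le hμnonneg hμ' (hs ▸ hs1) (by omega))
    (eps_le hΓ.le hτ.le hμnonneg (fun i hi => hμ' i (by omega)) hn)).trans (add_le_add ?_ ?_)
  · refine div_pow_le_div_pow (by positivity) ?_ (by linarith) (by linarith) (by omega)
    gcongr
    exact_mod_cast doubleFactorial_two_mul_sub_one_le m
  · refine mul_le_mul_of_nonneg_left (sum_le_sum fun k _ => ?_) (by positivity)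
    refine div_pow_le_div_pow (by positivity) ?_ (by linarith) (by linarith) (by omega)
    gcongr
    split_ifs with hk0
    · simp [hk0]
    · exact_mod_cast doubleFactorial_two_mul_sub_one_le k

/-- (Simplified bound.) For `m, n ≥ 1`, `Γ, τ₀ > 0` with `Γτ₀ < 1/4` and
`4Γτ₀(m+n-1) < 1`, and `μ` nonnegative with `μ 0 = 1` and `μ i ≤ i! τ₀^i` for
`1 ≤ i ≤ m+n-1`, one has
`B(m,n)/Γ ≤ ((m-1)!+1) m! (Γτ₀)^m / (1-4(m+n-1)Γτ₀)^{2m+1}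
 + n! (4Γτ₀)^n ∑_{k=0}^{m} h(k) k! (Γτ₀)^k / (1-4(m+n-1)Γτ₀)^{2k}`,
where `h(0) = 1` and `h(k) = (k-1)!+1` for `k ≥ 1`. -/
theorem Bfun_le (m n : ℕ) (hm : 1 ≤ m) (hn : 1 ≤ n) (Γ τ₀ : ℝ)
    (hΓ : 0 < Γ) (hτ : 0 < τ₀) (hquarter : Γ * τ₀ < 1 / 4)
    (hsmall : 4 * Γ * τ₀ * ((m : ℝ) + n - 1) < 1)
    (μ : ℕ → ℝ) (hμ0 : μ 0 = 1) (hμnonneg : ∀ i, 0 ≤ μ i)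
    (hμ : ∀ i, 1 ≤ i → i ≤ m + n - 1 → μ i ≤ i.factorial * τ₀ ^ i) :
    Bfun Γ μ m n / Γ ≤
      ((m - 1).factorial + 1) * m.factorial * (Γ * τ₀) ^ m /
          (1 - 4 * ((m : ℝ) + n - 1) * Γ * τ₀) ^ (2 * m + 1)
      + n.factorial * (4 * Γ * τ₀) ^ n *
          ∑ k ∈ Finset.range (m + 1),
            (if k = 0 then (1 : ℝ) else ((k - 1).factorial + 1 : ℝ)) * k.factorial *
              (Γ * τ₀) ^ k / (1 - 4 * ((m : ℝ) + n - 1) * Γ * τ₀) ^ (2 * k) :=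
  Bfun_le_general m n hm hn Γ τ₀ hΓ hτ hsmall μ hμ0 hμnonneg hμ
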